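/- arXiv:1105.0258 — 2 statements merged into one kernel-verified Lean document; each statement's English description precedes it below -/
import Mathlib

section
/- Let N ≥ 2 and 1 ≤ n ≤ N+1. For all points p_1,…,p_n in general position in P^N, the radical ideal I = ∩_{j=1}^n m_{p_j} ⊆ k[P^N] of the n points satisfies I^(Nr) ⊆ M^{(N-1)r}·I^r for all integers r ≥ 1. -/
open MvPolynomial Filter

/-- The homogeneous ideal of all forms vanishing at the (projective) point with
coordinate vector `p`. -/
noncomputable def pointIdeal {k : Type*} [Field k] {σ : Type*} (p : σ → k) :
    Ideal (MvPolynomial σ k) :=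
  Ideal.span { f | (∃ d, f.IsHomogeneous d) ∧ eval p f = 0 }

/-- The fat points ideal `⋂ⱼ m_{pⱼ}^{mⱼ}` (natural multiplicities). -/
noncomputable def fatIdeal {k : Type*} [Field k] {N n : ℕ} (p : Fin n → (Fin (N + 1) → k))
    (m : Fin n → ℕ) : Ideal (MvPolynomial (Fin (N + 1)) k) :=
  ⨅ j, pointIdeal (p j) ^ (m j)

/-- The fat points ideal with integer multiplicities, with the convention
`m_p^m = (1)` for `m ≤ 0`. -/
noncomputable def fatIdealZ {k : Type*} [Field k] {N n : ℕ} (p : Fin n → (Fin (N + 1) → k))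
    (m : Fin n → ℤ) : Ideal (MvPolynomial (Fin (N + 1)) k) :=
  ⨅ j, pointIdeal (p j) ^ (m j).toNat

/-- The irrelevant maximal ideal `M = (x_0, …, x_N)`. -/
noncomputable def maxIdeal (k : Type*) [Field k] (N : ℕ) : Ideal (MvPolynomial (Fin (N + 1)) k) :=
  Ideal.span (Set.range X)

/-- `α(I)`: the least `t ≥ 0` such that `I` contains a nonzero form of degree `t`. -/
noncomputable def alpha {k : Type*} [Field k] {σ : Type*}
    (I : Ideal (MvPolynomial σ k)) : ℕ :=
  sInf { t | ∃ f ∈ I, f ≠ 0 ∧ f.IsHomogeneous t }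

/-- The sequence `t ↦ α(I^{(t)})/t` attached to the fat points ideal with points `p`
and multiplicities `m`; its limit as `t → ∞` is the Waldschmidt constant `γ`. -/
noncomputable def alphaSeq {k : Type*} [Field k] {N n : ℕ}
    (p : Fin n → (Fin (N + 1) → k)) (m : Fin n → ℕ) (t : ℕ) : ℝ :=
  (alpha (fatIdeal p fun j => t * m j) : ℝ) / t

/-- `P` holds for `n`-tuples of points of `P^N` in general position: there is a
nonempty Zariski-open subset (the complement of the zero locus of a set `S` of
polynomials in the coordinates of the tuple) of tuples of nonzero coordinate
vectors on which `P` holds. -/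
def Generic (k : Type*) [Field k] (N n : ℕ)
    (P : (Fin n → (Fin (N + 1) → k)) → Prop) : Prop :=
  ∃ S : Set (MvPolynomial (Fin n × Fin (N + 1)) k),
    (∃ p : Fin n → (Fin (N + 1) → k), (∀ j, p j ≠ 0) ∧
      ∃ f ∈ S, eval (fun q => p q.1 q.2) f ≠ 0) ∧
    ∀ p : Fin n → (Fin (N + 1) → k), (∀ j, p j ≠ 0) →
      (∃ f ∈ S, eval (fun q => p q.1 q.2) f ≠ 0) → P p

/-!
When the `n × n` minor of the coordinate matrix of `p₁, …, pₙ` on the first `n` coordinates is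
nonzero, the points are linearly independent, so an invertible linear change of coordinates moves
them to coordinate points `e_{ι j}`, and the containment is invariant under such changes. For
coordinate points everything is monomial: `I` contains every variable `x_i` with `i ∉ range ι` and
every product `x_i x_{i'}` with `i ≠ i'`, and a monomial `x^a` of `I^(Nr)` satisfies
`N r + a_{ι j} ≤ |a|` for all `j`. Such a monomial has a divisor in `I^r` of codegree at least
`(N - 1) r`: use the variables outside `range ι` first, then pair the remaining ones greedily;
summing the inequalities over the `n ≤ N + 1` points shows that enough pairs are available.
-/

namespace Finsupp

variable {σ : Type*} [Fintype σ]

theorem sum_le_degree (a : σ →₀ ℕ) (s : Finset σ) : ∑ l ∈ s, a l ≤ a.degree := by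
  rw [degree_eq_sum]
  exact Finset.sum_le_sum_of_subset (Finset.subset_univ s)

variable [DecidableEq σ]

theorem add_sum_erase_eq_degree (a : σ →₀ ℕ) (i : σ) :
    a i + ∑ l ∈ Finset.univ.erase i, a l = a.degree := by
  rw [Finset.add_sum_erase _ _ (Finset.mem_univ i), degree_eq_sum]

/-- Pairing a variable of maximal exponent with any other one keeps the hypothesis
`m + h i ≤ deg h` alive for the remaining exponents. -/
theorem exists_single_add_single_le {m : ℕ} {h : σ →₀ ℕ}
    (h2m : 2 * (m + 1) ≤ h.degree) (hh : ∀ i, m + 1 + h i ≤ h.degree) :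
    ∃ i j, i ≠ j ∧ single i 1 + single j 1 ≤ h ∧
      ∀ l, m + (h - (single i 1 + single j 1) : σ →₀ ℕ) l + 2 ≤ h.degree := by
  have hne : h.support.Nonempty := support_nonempty_iff.2 (by rintro rfl; simp at h2m)
  obtain ⟨i, -, hi⟩ := h.support.exists_max_image h hne
  obtain ⟨j, hj, hjh⟩ : ∃ j ∈ Finset.univ.erase i, h j ≠ 0 := by
    refine Finset.exists_ne_zero_of_sum_ne_zero ?_
    have := add_sum_erase_eq_degree h i
    have := hh i
    omega
  have hji : j ≠ i := Finset.ne_of_mem_erase hj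
  have hij : h j ≤ h i := hi j (mem_support_iff.2 hjh)
  have he : ∀ l, (single i 1 + single j 1 : σ →₀ ℕ) l =
      (if l = i then 1 else 0) + (if l = j then 1 else 0) := fun l => by
    simp [single_apply, eq_comm]
  refine ⟨i, j, hji.symm, fun l => ?_, fun l => ?_⟩
  · rw [he]
    split_ifs with hli hlj hlj
    · exact absurd (hlj.symm.trans hli) hji
    · subst hli; omega
    · subst hlj; omega
    · omega
  · rw [tsub_apply, he]
    have := hh l
    split_ifs with hli hlj hlj
    · exact absurd (hlj.symm.trans hli) hji
    · omega
    · omega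
    · by_cases hl : h l ≤ m
      · omega
      have hhl := hi l (mem_support_iff.2 (by omega))
      have := sum_le_degree h {i, j, l}
      rw [Finset.sum_insert (by simp [hji.symm, Ne.symm hli]), Finset.sum_pair (Ne.symm hlj)]
        at this
      omega

end Finsupp

namespace MvPolynomial

open Finsupp

variable {σ R : Type*} [CommSemiring R]

theorem mem_of_forall_monomial_mem {I : Ideal (MvPolynomial σ R)} {f : MvPolynomial σ R}
    (h : ∀ a ∈ f.support, monomial a 1 ∈ I) : f ∈ I := by
  rw [f.as_sum]
  refine Ideal.sum_mem _ fun a ha => ?_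
  rw [← mul_one (coeff a f), ← C_mul_monomial]
  exact Ideal.mul_mem_left _ _ (h a ha)

theorem monomial_mem_pow_of_forall_X_mem {I : Ideal (MvPolynomial σ R)} {b : σ →₀ ℕ}
    (h : ∀ i ∈ b.support, X i ∈ I) : monomial b (1 : R) ∈ I ^ b.degree := by
  rw [monomial_eq, C_1, one_mul, Finsupp.prod, degree_apply, ← Finset.prod_pow_eq_pow_sum]
  exact Ideal.prod_mem_prod fun i hi => Ideal.pow_mem_pow (h i hi) _

theorem monomial_mem_idealOfVars_pow_mul {J : Ideal (MvPolynomial σ R)} {a b : σ →₀ ℕ}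
    (hba : b ≤ a) (hb : monomial b (1 : R) ∈ J) :
    monomial a (1 : R) ∈ idealOfVars σ R ^ (a.degree - b.degree) * J := by
  have hsplit : a - b + b = a := tsub_add_cancel_of_le hba
  have hdeg : (a - b).degree = a.degree - b.degree := by
    rw [← hsplit, map_add, Nat.add_sub_cancel, hsplit]
  rw [← hsplit, ← mul_one (1 : R), ← monomial_mul, hsplit, ← hdeg]
  exact Ideal.mul_mem_mul
    (monomial_mem_pow_of_forall_X_mem fun i _ => Ideal.subset_span ⟨i, rfl⟩) hb

variable (R) in
noncomputable def weightIdeal (T : Finset σ) (m : ℕ) : Ideal (MvPolynomial σ R) :=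
  Ideal.span ((fun a => monomial a 1) '' {a | m ≤ ∑ i ∈ T, a i})

theorem mem_weightIdeal {T : Finset σ} {m : ℕ} {f : MvPolynomial σ R} :
    f ∈ weightIdeal R T m ↔ ∀ a ∈ f.support, m ≤ ∑ i ∈ T, a i := by
  rw [weightIdeal, mem_ideal_span_monomial_image]
  refine forall₂_congr fun a _ => ⟨fun ⟨b, hb, hba⟩ => ?_, fun h => ⟨a, h, le_rfl⟩⟩
  exact hb.trans (Finset.sum_le_sum fun i _ => hba i)

theorem weightIdeal_mul_le [DecidableEq σ] (T : Finset σ) (m m' : ℕ) :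
    weightIdeal R T m * weightIdeal R T m' ≤ weightIdeal R T (m + m') := by
  refine Ideal.mul_le.2 fun f hf g hg => mem_weightIdeal.2 fun a ha => ?_
  obtain ⟨b, hb, c, hc, rfl⟩ := Finset.mem_add.1 (support_mul f g ha)
  simpa [Finset.sum_add_distrib] using
    add_le_add (mem_weightIdeal.1 hf b hb) (mem_weightIdeal.1 hg c hc)

theorem weightIdeal_one_pow_le [DecidableEq σ] (T : Finset σ) (m : ℕ) :
    weightIdeal R T 1 ^ m ≤ weightIdeal R T m := by
  induction m with
  | zero => exact fun f _ => mem_weightIdeal.2 fun _ _ => Nat.zero_le _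
  | succ m ih => exact (Ideal.mul_mono_left ih).trans (weightIdeal_mul_le T m 1)

section LinearSubst

open Matrix

variable [Fintype σ]

noncomputable def linearSubst (B : Matrix σ σ R) : MvPolynomial σ R →ₐ[R] MvPolynomial σ R :=
  aeval fun i => ∑ l, C (B i l) * X l

theorem linearSubst_comp (B B' : Matrix σ σ R) :
    (linearSubst B).comp (linearSubst B') = linearSubst (B' * B) := by
  refine algHom_ext fun i => ?_
  simp only [linearSubst, AlgHom.comp_apply, aeval_X, map_sum, map_mul, aeval_C, algebraMap_eq,
    Matrix.mul_apply, Finset.mul_sum, Finset.sum_mul, ← mul_assoc]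
  exact Finset.sum_comm

theorem linearSubst_one [DecidableEq σ] : linearSubst (1 : Matrix σ σ R) = AlgHom.id R _ := by
  refine algHom_ext fun i => ?_
  simp [linearSubst, Matrix.one_apply]

theorem eval_linearSubst (B : Matrix σ σ R) (p : σ → R) (f : MvPolynomial σ R) :
    eval p (linearSubst B f) = eval (B *ᵥ p) f := by
  change aeval p (aeval _ f) = aeval (B *ᵥ p) f
  rw [← AlgHom.comp_apply, comp_aeval]
  congr 2
  ext i
  simp [mulVec, dotProduct]

theorem IsHomogeneous.linearSubst {f : MvPolynomial σ R} {d : ℕ} (hf : f.IsHomogeneous d)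
    (B : Matrix σ σ R) : (linearSubst B f).IsHomogeneous d := by
  have := hf.aeval (fun i => ∑ l, C (B i l) * X l) fun i =>
    IsHomogeneous.sum _ _ _ fun l _ => isHomogeneous_C_mul_X (B i l) l
  rwa [one_mul] at this

theorem map_linearSubst_idealOfVars_le (B : Matrix σ σ R) :
    (idealOfVars σ R).map (linearSubst B) ≤ idealOfVars σ R := by
  rw [Ideal.map_span, Ideal.span_le]
  rintro _ ⟨_, ⟨i, rfl⟩, rfl⟩
  simp only [linearSubst, aeval_X, SetLike.mem_coe]
  exact Ideal.sum_mem _ fun l _ => Ideal.mul_mem_left _ _ (Ideal.subset_span ⟨l, rfl⟩)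

end LinearSubst

variable [Fintype σ] [DecidableEq σ]

theorem exists_le_monomial_mem_pow_of_X_mul_X_mem {I : Ideal (MvPolynomial σ R)}
    (hI : ∀ i j, i ≠ j → X i * X j ∈ I) (m : ℕ) (h : σ →₀ ℕ) (h2m : 2 * m ≤ h.degree)
    (hh : ∀ i, m + h i ≤ h.degree) :
    ∃ p ≤ h, p.degree = 2 * m ∧ monomial p (1 : R) ∈ I ^ m := by
  induction m generalizing h with
  | zero => exact ⟨0, zero_le, map_zero _, by simp⟩
  | succ m ih =>
    obtain ⟨i, j, hij, he, hrest⟩ := exists_single_add_single_le h2m hh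
    set e := single i 1 + single j 1
    have hdeg : (h - e).degree + 2 = h.degree := by
      simpa [e, map_add] using congrArg degree (tsub_add_cancel_of_le he)
    obtain ⟨p, hp, hpdeg, hpI⟩ := ih (h - e) (by omega) fun l => by
      have := hrest l
      omega
    refine ⟨p + e, (add_le_add hp le_rfl).trans (tsub_add_cancel_of_le he).le, ?_, ?_⟩
    · simp [e, hpdeg]
      ring
    · have : monomial (p + e) (1 : R) = monomial p 1 * (X i * X j) := by
        simp only [e, X, monomial_mul, mul_one]
      rw [this, pow_succ]
      exact Ideal.mul_mem_mul hpI (hI i j hij)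

/-- Variables outside `H` are used first; if there are fewer than `r` of them, the remaining
factors of `I ^ r` are pairs of variables of `H`, and summing `ha` over `H` (this is where
`#H ≤ N + 1` enters) shows that there are enough of them. -/
theorem exists_le_monomial_mem_pow {I : Ideal (MvPolynomial σ R)} {H : Finset σ}
    (hX : ∀ i ∉ H, X i ∈ I) (hXX : ∀ i j, i ≠ j → X i * X j ∈ I) {N r : ℕ} (hN : 1 ≤ N)
    (hH : H.Nonempty) (hcard : H.card ≤ N + 1) {a : σ →₀ ℕ}
    (ha : ∀ i ∈ H, N * r + a i ≤ a.degree) :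
    ∃ b ≤ a, (N - 1) * r + b.degree ≤ a.degree ∧ monomial b (1 : R) ∈ I ^ r := by
  set hd := a.filter (· ∈ H)
  set tl := a.filter (· ∉ H)
  have hsplit : hd + tl = a := filter_add_filter_not a _
  have hdeg : hd.degree + tl.degree = a.degree := by rw [← map_add, hsplit]
  have htl : ∀ {b}, b ≤ tl → monomial b (1 : R) ∈ I ^ b.degree := fun hb =>
    monomial_mem_pow_of_forall_X_mem fun i hi => hX i fun hiH => by
      simpa [tl, filter_apply, hiH] using (Finsupp.mem_support_iff.1 hi).bot_lt.trans_le (hb i)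
  have hNr : (N - 1) * r + r = N * r := by
    rw [← Nat.succ_mul, Nat.succ_eq_add_one, Nat.sub_add_cancel hN]
  obtain ⟨i₀, hi₀⟩ := hH
  have hai₀ := ha i₀ hi₀
  rcases le_or_gt r tl.degree with hT | hT
  · obtain ⟨b, hb, rfl⟩ := exists_le_degree_eq tl r hT
    exact ⟨b, hb.trans (hsplit ▸ le_add_self), by omega, htl hb⟩
  have hhd_apply : ∀ i, hd i = if i ∈ H then a i else 0 := fun i => filter_apply _ _ _
  have hsum : H.card * (N * r) + hd.degree ≤ H.card * a.degree := by
    have := Finset.sum_le_sum ha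
    simpa [Finset.sum_add_distrib, degree_eq_sum, hhd_apply, Finset.sum_ite_mem] using this
  have hcard1 : 1 ≤ H.card := Finset.card_pos.2 ⟨i₀, hi₀⟩
  have key : N * r + r ≤ hd.degree + 2 * tl.degree := by nlinarith
  have hr : r ≤ N * r := Nat.le_mul_of_pos_left r hN
  obtain ⟨p, hp, hpdeg, hpI⟩ := exists_le_monomial_mem_pow_of_X_mul_X_mem hXX (r - tl.degree) hd
    (by omega) fun i => by
      rw [hhd_apply]
      split_ifs with hi
      · have := ha i hi
        omega
      · omega
  refine ⟨p + tl, hsplit ▸ add_le_add hp le_rfl, ?_, ?_⟩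
  · rw [map_add, hpdeg]
    omega
  · rw [← mul_one (1 : R), ← monomial_mul, show r = r - tl.degree + tl.degree by omega, pow_add]
    exact Ideal.mul_mem_mul hpI (htl le_rfl)

end MvPolynomial

section PointIdeal

open Matrix

variable {k σ : Type*} [Field k]

theorem X_mem_pointIdeal {p : σ → k} {i : σ} (hi : p i = 0) : X i ∈ pointIdeal p :=
  Ideal.subset_span ⟨⟨1, isHomogeneous_X k i⟩, by simpa using hi⟩

theorem map_linearSubst_pointIdeal_le [Fintype σ] (B : Matrix σ σ k) (q : σ → k) :
    (pointIdeal (B *ᵥ q)).map (linearSubst B) ≤ pointIdeal q := by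
  rw [pointIdeal, Ideal.map_span, Ideal.span_le]
  rintro _ ⟨f, ⟨⟨d, hf⟩, hf0⟩, rfl⟩
  exact Ideal.subset_span ⟨⟨d, hf.linearSubst B⟩, by rwa [eval_linearSubst]⟩

variable [Fintype σ] [DecidableEq σ]

theorem pointIdeal_single_le_weightIdeal (i : σ) :
    pointIdeal (Pi.single i (1 : k)) ≤ weightIdeal k (Finset.univ.erase i) 1 := by
  refine Ideal.span_le.2 fun f ⟨⟨d, hf⟩, hf0⟩ => mem_weightIdeal.2 fun a ha => ?_
  by_contra! hlt
  have hdeg : ∀ b ∈ f.support, b.degree = d := fun b hb => by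
    by_contra h
    exact mem_support_iff.1 hb (hf.coeff_eq_zero h)
  have ha0 : ∀ l ≠ i, a l = 0 := fun l hl =>
    Finset.sum_eq_zero_iff.1 (by omega) l (Finset.mem_erase.2 ⟨hl, Finset.mem_univ l⟩)
  -- by homogeneity `a` is the only exponent of `f` supported on `{i}`, so `f (e_i) = coeff a f`
  have hother : ∀ b ∈ f.support, b ≠ a → ∃ l ≠ i, b l ≠ 0 := by
    intro b hb hba
    by_contra! hb0
    refine hba (Finsupp.ext fun l => ?_)
    rcases eq_or_ne l i with rfl | hl
    · have hb' := Finsupp.add_sum_erase_eq_degree b l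
      have ha' := Finsupp.add_sum_erase_eq_degree a l
      rw [Finset.sum_eq_zero fun l' hl' => hb0 l' (Finset.ne_of_mem_erase hl')] at hb'
      rw [Finset.sum_eq_zero fun l' hl' => ha0 l' (Finset.ne_of_mem_erase hl')] at ha'
      have := hdeg a ha
      have := hdeg b hb
      omega
    · rw [hb0 l hl, ha0 l hl]
  have heval : eval (Pi.single i 1) f = coeff a f := by
    rw [eval_eq', Finset.sum_eq_single a]
    · refine (mul_eq_left₀ ?_).2 (Finset.prod_eq_one fun l _ => ?_)
      · exact mem_support_iff.1 ha
      rcases eq_or_ne l i with rfl | hl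
      · simp
      · simp [ha0 l hl]
    · intro b hb hba
      obtain ⟨l, hl, hbl⟩ := hother b hb hba
      rw [Finset.prod_eq_zero (Finset.mem_univ l) (by simp [Pi.single_eq_of_ne hl, hbl]), mul_zero]
    · exact fun h => absurd ha h
  exact mem_support_iff.1 ha (heval ▸ hf0)

theorem add_le_degree_of_mem_pointIdeal_single_pow {i : σ} {m : ℕ} {f : MvPolynomial σ k}
    (hf : f ∈ pointIdeal (Pi.single i (1 : k)) ^ m) {a : σ →₀ ℕ} (ha : a ∈ f.support) :
    m + a i ≤ a.degree := by
  have hmem := weightIdeal_one_pow_le _ m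
    (Ideal.pow_right_mono (pointIdeal_single_le_weightIdeal i) m hf)
  have := mem_weightIdeal.1 hmem a ha
  have := Finsupp.add_sum_erase_eq_degree a i
  omega

end PointIdeal

section FatIdeal

open Function Matrix

variable {k : Type*} [Field k] {N n : ℕ}

theorem map_linearSubst_fatIdeal_le (B : Matrix (Fin (N + 1)) (Fin (N + 1)) k)
    {p q : Fin n → Fin (N + 1) → k} (h : ∀ j, B *ᵥ p j = q j) (m : Fin n → ℕ) :
    (fatIdeal q m).map (linearSubst B) ≤ fatIdeal p m := by
  refine le_iInf fun j => (Ideal.map_mono (iInf_le _ j)).trans ?_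
  rw [Ideal.map_pow, ← h j]
  exact Ideal.pow_right_mono (map_linearSubst_pointIdeal_le B (p j)) _

theorem fatIdeal_le_of_linearSubst {B B' : Matrix (Fin (N + 1)) (Fin (N + 1)) k}
    (hBB' : B * B' = 1) (hB'B : B' * B = 1) {p q : Fin n → Fin (N + 1) → k}
    (hq : ∀ j, B' *ᵥ q j = p j) {m m' : Fin n → ℕ} {s r : ℕ}
    (h : fatIdeal q m ≤ maxIdeal k N ^ s * fatIdeal q m' ^ r) :
    fatIdeal p m ≤ maxIdeal k N ^ s * fatIdeal p m' ^ r := by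
  have hp : ∀ j, B *ᵥ p j = q j := fun j => by rw [← hq, mulVec_mulVec, hBB', one_mulVec]
  calc fatIdeal p m
      ≤ ((fatIdeal p m).map (linearSubst B')).map (linearSubst B) := fun f hf => by
        have hf' : linearSubst B (linearSubst B' f) = f := by
          rw [← AlgHom.comp_apply, linearSubst_comp, hB'B, linearSubst_one, AlgHom.id_apply]
        exact hf' ▸ Ideal.mem_map_of_mem _ (Ideal.mem_map_of_mem _ hf)
    _ ≤ (maxIdeal k N ^ s * fatIdeal q m' ^ r).map (linearSubst B) :=
        Ideal.map_mono ((map_linearSubst_fatIdeal_le B' hq m).trans h)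
    _ = (maxIdeal k N).map (linearSubst B) ^ s * (fatIdeal q m').map (linearSubst B) ^ r := by
        rw [Ideal.map_mul, Ideal.map_pow, Ideal.map_pow]
    _ ≤ maxIdeal k N ^ s * fatIdeal p m' ^ r :=
        Ideal.mul_mono (Ideal.pow_right_mono (map_linearSubst_idealOfVars_le B) s)
          (Ideal.pow_right_mono (map_linearSubst_fatIdeal_le B hp m') r)

theorem fatIdeal_single_le {ι : Fin n → Fin (N + 1)} (hι : Injective ι) (hN : 1 ≤ N) (hn : 1 ≤ n)
    (r : ℕ) :
    fatIdeal (fun j => Pi.single (ι j) (1 : k)) (fun _ => N * r) ≤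
      maxIdeal k N ^ ((N - 1) * r) *
        fatIdeal (fun j => Pi.single (ι j) (1 : k)) (fun _ => 1) ^ r := by
  set I := fatIdeal (fun j => Pi.single (ι j) (1 : k)) (fun _ => 1)
  have hX : ∀ i ∉ Finset.univ.image ι, X i ∈ I := fun i hi =>
    (Submodule.mem_iInf _).2 fun j => by
      rw [pow_one]
      exact X_mem_pointIdeal
        (Pi.single_eq_of_ne (fun h => hi (Finset.mem_image.2 ⟨j, Finset.mem_univ j, h.symm⟩)) _)
  have hXX : ∀ i i', i ≠ i' → X i * X i' ∈ I := fun i i' hii' =>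
    (Submodule.mem_iInf _).2 fun j => by
      rw [pow_one]
      rcases eq_or_ne i (ι j) with rfl | hi
      · exact Ideal.mul_mem_left _ _ (X_mem_pointIdeal (Pi.single_eq_of_ne hii'.symm _))
      · exact Ideal.mul_mem_right _ _ (X_mem_pointIdeal (Pi.single_eq_of_ne hi _))
  have hcard : (Finset.univ.image ι).card ≤ N + 1 := by
    simpa [Finset.card_image_of_injective _ hι] using Fintype.card_le_of_injective ι hι
  intro f hf
  refine mem_of_forall_monomial_mem fun a ha => ?_
  obtain ⟨b, hba, hdeg, hb⟩ := exists_le_monomial_mem_pow hX hXX hN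
    ⟨ι ⟨0, hn⟩, Finset.mem_image_of_mem ι (Finset.mem_univ _)⟩ hcard fun i hi => by
      obtain ⟨j, -, rfl⟩ := Finset.mem_image.1 hi
      exact add_le_degree_of_mem_pointIdeal_single_pow ((Submodule.mem_iInf _).1 hf j) ha
  exact Ideal.mul_mono_left (Ideal.pow_le_pow_right (by omega))
    (monomial_mem_idealOfVars_pow_mul hba hb)

end FatIdeal

section LinearAlgebra

open Function Matrix

variable {k ι σ : Type*} [Field k]

theorem linearIndependent_of_det_ne_zero [Fintype ι] [DecidableEq ι] {v : ι → σ → k} (e : ι → σ)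
    (h : (Matrix.of fun j j' => v j (e j')).det ≠ 0) : LinearIndependent k v :=
  LinearIndependent.of_comp (LinearMap.funLeft k k e)
    (linearIndependent_rows_iff_isUnit.2 ((isUnit_iff_isUnit_det _).2 h.isUnit))

theorem LinearIndependent.exists_mulVec_single_eq [Fintype σ] [DecidableEq σ] {v : ι → σ → k}
    (hv : LinearIndependent k v) :
    ∃ e : ι → σ, Injective e ∧ ∃ B B' : Matrix σ σ k, B * B' = 1 ∧ B' * B = 1 ∧
      ∀ j, B' *ᵥ Pi.single (e j) 1 = v j := by
  have hs := hv.linearIndepOn_id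
  let b := Module.Basis.extend hs
  let E := b.indexEquiv (Pi.basisFun k σ)
  let B' := (Pi.basisFun k σ).toMatrix (b.reindex E)
  let _ : Invertible B' := (Pi.basisFun k σ).invertibleToMatrix (b.reindex E)
  refine ⟨fun j => E ⟨v j, hs.subset_extend _ (Set.mem_range_self j)⟩,
    E.injective.comp fun j j' h => hv.injective (congrArg Subtype.val h),
    ⅟B', B', invOf_mul_self B', mul_invOf_self B', fun j => ?_⟩
  ext i
  rw [mulVec_single_one]
  simp [B', b, Module.Basis.toMatrix_apply]

theorem eval_det_of_X [Fintype ι] [DecidableEq ι] (e : ι → σ) (x : ι × σ → k) :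
    eval x (Matrix.of fun j j' => (X (j, e j') : MvPolynomial _ k)).det =
      (Matrix.of fun j j' => x (j, e j')).det := by
  rw [RingHom.map_det]
  congr 1
  ext
  simp

end LinearAlgebra

theorem statement1_general (k : Type*) [Field k] (N n : ℕ)
    (hN : 2 ≤ N) (hn1 : 1 ≤ n) (hn2 : n ≤ N + 1) :
    Generic k N n (fun p =>
      ∀ r : ℕ, 1 ≤ r →
        fatIdeal p (fun _ => N * r) ≤
          maxIdeal k N ^ ((N - 1) * r) * (fatIdeal p (fun _ => 1)) ^ r) := by
  set minor : MvPolynomial (Fin n × Fin (N + 1)) k :=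
    (Matrix.of fun j j' => X (j, Fin.castLE hn2 j')).det with hminor
  refine ⟨{minor}, ⟨fun j => Pi.single (Fin.castLE hn2 j) 1, fun j => ?_, minor, rfl, ?_⟩, ?_⟩
  · simp
  · rw [hminor, eval_det_of_X]
    convert one_ne_zero (α := k)
    convert Matrix.det_one (n := Fin n) (R := k) using 2
    ext j j'
    simp [Matrix.one_apply, Pi.single_apply, (Fin.castLE_injective hn2).eq_iff, eq_comm]
  · rintro p - ⟨f, rfl, hf⟩ r -
    rw [hminor, eval_det_of_X] at hf
    obtain ⟨ι, hι, B, B', hBB', hB'B, hq⟩ :=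
      (linearIndependent_of_det_ne_zero (v := p) _ hf).exists_mulVec_single_eq
    exact fatIdeal_le_of_linearSubst hBB' hB'B hq (fatIdeal_single_le hι (by omega) hn1 r)

/-- Let `N ≥ 2` and `1 ≤ n ≤ N + 1`. For points in general position in `ℙᴺ`, the
radical ideal `I = ⋂ⱼ m_{pⱼ}` satisfies `I^(Nr) ⊆ M^((N-1)r) * I^r` for all `r ≥ 1`. -/
theorem statement1 (k : Type*) [Field k] [CharZero k] (N n : ℕ)
    (hN : 2 ≤ N) (hn1 : 1 ≤ n) (hn2 : n ≤ N + 1) :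
    Generic k N n (fun p =>
      ∀ r : ℕ, 1 ≤ r →
        fatIdeal p (fun _ => N * r) ≤
          maxIdeal k N ^ ((N - 1) * r) * (fatIdeal p (fun _ => 1)) ^ r) :=
  statement1_general k N n hN hn1 hn2
end

section
/- For every integer m ≥ 1 and points p_1,…,p_8 in general position in P^3, the fat points ideal I(m^{×8}) = ∩_{j=1}^8 m_{p_j}^m contains no nonzero form of degree less than 2m; that is, α(I(m^{×8})) ≥ 2m. -/
open MvPolynomial Filter

/-!
Vanishing to order `m` at `p` means lying in `(ker (eval p)) ^ m`, i.e. having no Taylor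
coefficients of order `< m` at `p`. For forms of degree `2m - 1` these are linear conditions whose
coefficients are polynomials in the coordinates of the points, so the 8-tuples admitting no
nonzero solution form the complement of a determinantal hypersurface, and it suffices to exhibit
one such tuple: the cube vertices `(1, ±1, ±1, ±1)`.

A form `F` of degree `t` vanishing to order `m` at these points vanishes to order `m` at all
sixteen sign vectors. The product `N` of the sixteen sign changes `F(s • X)` is then even in every
variable, `N = G(X²)`, and vanishes to order `16m` at `1`. As `X ↦ X²` is étale at `1` in
characteristic `≠ 2`, `G` also vanishes to order `16m` there, so `8t = deg G ≥ 16m`.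
-/

namespace MvPolynomial

variable {σ R : Type*} [CommRing R]

noncomputable def taylor (p : σ → R) : MvPolynomial σ R ≃ₐ[R] MvPolynomial σ R :=
  AlgEquiv.ofAlgHom (aeval fun i => C (p i) + X i) (aeval fun i => X i - C (p i))
    (by ext i : 1; simp) (by ext i : 1; simp)

theorem taylor_apply (p : σ → R) (f : MvPolynomial σ R) :
    taylor p f = aeval (fun i => C (p i) + X i) f := rfl

theorem constantCoeff_comp_taylor (p : σ → R) :
    constantCoeff.comp (taylor p : MvPolynomial σ R →+* MvPolynomial σ R) = eval p := by
  ext <;> simp [taylor_apply]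

theorem ker_constantCoeff : RingHom.ker (constantCoeff (σ := σ) (R := R)) = idealOfVars σ R := by
  ext f
  rw [RingHom.mem_ker, ← pow_one (idealOfVars σ R), mem_pow_idealOfVars_iff']
  simp [Finsupp.degree_eq_zero_iff, constantCoeff_eq]

theorem mem_pow_ker_eval_iff (p : σ → R) (m : ℕ) (f : MvPolynomial σ R) :
    f ∈ RingHom.ker (eval p) ^ m ↔ taylor p f ∈ idealOfVars σ R ^ m := by
  let e := (taylor p).toRingEquiv
  have h : RingHom.ker (eval p) = (idealOfVars σ R).comap e := by
    ext g
    rw [← ker_constantCoeff, Ideal.mem_comap, RingHom.mem_ker, RingHom.mem_ker,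
      ← constantCoeff_comp_taylor]
    rfl
  rw [h, ← Ideal.map_symm, ← Ideal.map_pow, Ideal.map_symm]
  rfl

theorem map_taylor {S : Type*} [CommRing S] (φ : R →+* S) (p : σ → R)
    (f : MvPolynomial σ R) :
    map φ (taylor p f) = taylor (φ ∘ p) (map φ f) := by
  change ((map φ).comp (taylor p : MvPolynomial σ R →+* _)) f =
    ((taylor (φ ∘ p) : MvPolynomial σ S →+* MvPolynomial σ S).comp (map φ)) f
  congr 1
  ext <;> simp [taylor_apply]

theorem totalDegree_taylor_le [Nontrivial R] (p : σ → R) (f : MvPolynomial σ R) :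
    (taylor p f).totalDegree ≤ f.totalDegree := by
  conv_lhs => rw [f.as_sum, map_sum]
  refine (totalDegree_finsetSum _ _).trans (Finset.sup_le fun d hd => ?_)
  rw [taylor_apply, aeval_monomial, algebraMap_eq]
  refine (totalDegree_mul _ _).trans ?_
  rw [totalDegree_C, zero_add]
  refine (totalDegree_finsetProd _ _).trans
    ((Finset.sum_le_sum fun i _ => ?_).trans (le_totalDegree hd))
  refine (totalDegree_pow _ _).trans (mul_le_of_le_one_right' ?_)
  exact (totalDegree_add _ _).trans (by simp [totalDegree_X])

theorem le_totalDegree_of_mem_pow_ker_eval [Nontrivial R] {p : σ → R} {m : ℕ}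
    {f : MvPolynomial σ R} (hf : f ∈ RingHom.ker (eval p) ^ m) (hf0 : f ≠ 0) :
    m ≤ f.totalDegree := by
  rw [mem_pow_ker_eval_iff, mem_pow_idealOfVars_iff] at hf
  have h0 : taylor p f ≠ 0 := by simpa using hf0
  obtain ⟨d, hd⟩ := support_nonempty.mpr h0
  exact (hf d hd).trans ((le_totalDegree hd).trans (totalDegree_taylor_le p f))

theorem _root_.Finsupp.eq_of_le_of_degree_le {a b : σ →₀ ℕ} (hab : a ≤ b)
    (h : b.degree ≤ a.degree) : a = b := by
  have hsum : b.degree = a.degree + (b - a).degree := by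
    rw [← map_add, add_tsub_cancel_of_le hab]
  have : b - a = 0 := (Finsupp.degree_eq_zero_iff _).mp (by omega)
  exact le_antisymm hab (tsub_eq_zero_iff_le.mp this)

theorem aeval_X_mul_monomial (v : σ → MvPolynomial σ R) (d : σ →₀ ℕ) (c : R) :
    aeval (fun i => X i * v i) (monomial d c) = monomial d c * d.prod fun i e => v i ^ e := by
  rw [aeval_monomial, algebraMap_eq, monomial_eq, mul_assoc]
  simp only [mul_pow, Finsupp.prod_mul]

theorem mem_pow_idealOfVars_of_aeval_X_mul [IsDomain R] {v : σ → MvPolynomial σ R}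
    (hv : ∀ i, constantCoeff (v i) ≠ 0) {m : ℕ} {H : MvPolynomial σ R}
    (h : aeval (fun i => X i * v i) H ∈ idealOfVars σ R ^ m) : H ∈ idealOfVars σ R ^ m := by
  classical
  rw [mem_pow_idealOfVars_iff] at h ⊢
  by_contra! hlow
  obtain ⟨x, hx, hxm⟩ := hlow
  -- A monomial of minimal degree in `H` is not hit by any other term of the substitution.
  obtain ⟨d, hd, hmin⟩ := H.support.exists_min_image Finsupp.degree ⟨x, hx⟩
  have hcoeff : coeff d (aeval (fun i => X i * v i) H) =
      coeff d H * constantCoeff (d.prod fun i e => v i ^ e) := by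
    conv_lhs => rw [H.as_sum, map_sum, coeff_sum]
    rw [Finset.sum_eq_single d, aeval_X_mul_monomial, coeff_monomial_mul', if_pos le_rfl,
      tsub_self, constantCoeff_eq]
    · intro κ hκ hne
      rw [aeval_X_mul_monomial, coeff_monomial_mul', if_neg]
      exact fun hle => hne (Finsupp.eq_of_le_of_degree_le hle (hmin κ hκ))
    · exact fun hd' => absurd hd hd'
  have hne : coeff d (aeval (fun i => X i * v i) H) ≠ 0 := by
    rw [hcoeff, map_finsuppProd]
    exact mul_ne_zero (mem_support_iff.mp hd)
      (Finsupp.prod_ne_zero_iff.mpr fun i _ => by simpa using pow_ne_zero _ (hv i))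
  have := h d (mem_support_iff.mpr hne)
  have := hmin x hx
  omega

theorem mem_pow_ker_eval_one_of_expand [IsDomain R] (h2 : (2 : R) ≠ 0) {m : ℕ}
    {G : MvPolynomial σ R} (h : expand 2 G ∈ RingHom.ker (eval 1) ^ m) :
    G ∈ RingHom.ker (eval 1) ^ m := by
  rw [mem_pow_ker_eval_iff] at h ⊢
  have key : (taylor (1 : σ → R)).toAlgHom.comp (expand 2) =
      (aeval fun i => X i * (2 + X i)).comp (taylor (1 : σ → R)).toAlgHom := by
    ext i : 1
    simp [taylor_apply]
    ring
  replace key := DFunLike.congr_fun key G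
  simp only [AlgHom.comp_apply, AlgEquiv.toAlgHom_apply] at key
  rw [key] at h
  exact mem_pow_idealOfVars_of_aeval_X_mul (fun i => by
    rwa [map_add, constantCoeff_X, add_zero, map_ofNat]) h

noncomputable def scale (c : σ → R) : MvPolynomial σ R →ₐ[R] MvPolynomial σ R :=
  aeval fun i => C (c i) * X i

theorem scale_monomial (c : σ → R) (d : σ →₀ ℕ) (a : R) :
    scale c (monomial d a) = monomial d (a * d.prod fun i e => c i ^ e) := by
  rw [scale, aeval_monomial, algebraMap_eq, monomial_eq, C_mul, mul_assoc, map_finsuppProd,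
    ← Finsupp.prod_mul]
  simp only [mul_pow, map_pow]

theorem coeff_scale (c : σ → R) (d : σ →₀ ℕ) (f : MvPolynomial σ R) :
    coeff d (scale c f) = (d.prod fun i e => c i ^ e) * coeff d f := by
  classical
  induction f using MvPolynomial.induction_on' with
  | monomial κ a =>
    rw [scale_monomial, coeff_monomial, coeff_monomial]
    split_ifs with h
    · rw [h, mul_comm]
    · rw [mul_zero]
  | add f g hf hg => rw [map_add, coeff_add, coeff_add, hf, hg, mul_add]

theorem eval_scale (c x : σ → R) (f : MvPolynomial σ R) :
    eval x (scale c f) = eval (c * x) f := by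
  have h : (eval x).comp (scale c : MvPolynomial σ R →+* MvPolynomial σ R) = eval (c * x) := by
    ext <;> simp [scale]
  exact RingHom.congr_fun h f

theorem scale_scale (c c' : σ → R) (f : MvPolynomial σ R) :
    scale c (scale c' f) = scale (c * c') f := by
  ext d
  simp only [coeff_scale, Pi.mul_apply, mul_pow, Finsupp.prod_mul]
  ring

theorem scale_one (f : MvPolynomial σ R) : scale 1 f = f := by
  ext d
  simp [coeff_scale]

theorem IsHomogeneous.scale_const {F : MvPolynomial σ R} {t : ℕ} (hF : F.IsHomogeneous t)
    (a : R) : scale (fun _ => a) F = a ^ t • F := by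
  ext d
  rw [coeff_scale, coeff_smul, smul_eq_mul]
  by_cases hd : coeff d F = 0
  · rw [hd, mul_zero, mul_zero]
  rw [← hF hd, Finsupp.weight_apply, Finsupp.sum, Finsupp.prod, ← Finset.prod_pow_eq_pow_sum]
  simp

theorem IsHomogeneous.scale {F : MvPolynomial σ R} {t : ℕ} (hF : F.IsHomogeneous t)
    (c : σ → R) : (scale c F).IsHomogeneous t :=
  fun d hd => hF (right_ne_zero_of_mul (by rwa [coeff_scale] at hd))

theorem scale_mem_pow_ker_eval {c x : σ → R} {m : ℕ} {f : MvPolynomial σ R}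
    (hf : f ∈ RingHom.ker (eval (c * x)) ^ m) : scale c f ∈ RingHom.ker (eval x) ^ m := by
  have h : RingHom.ker (eval (c * x)) = (RingHom.ker (eval x)).comap (scale c) := by
    ext g
    simp [eval_scale]
  rw [h] at hf
  exact Ideal.le_comap_pow _ m hf

theorem IsHomogeneous.mem_pow_ker_eval_smul {k : Type*} [Field k] {F : MvPolynomial σ k}
    {t : ℕ} (hF : F.IsHomogeneous t) {q : σ → k} {c : k} (hc : c ≠ 0) {m : ℕ}
    (h : F ∈ RingHom.ker (eval q) ^ m) : F ∈ RingHom.ker (eval (c • q)) ^ m := by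
  have hq : (fun _ => c⁻¹) * c • q = q := by
    ext i
    simp [hc]
  have h' := scale_mem_pow_ker_eval (c := fun _ => c⁻¹) (x := c • q) (hq.symm ▸ h)
  rw [IsHomogeneous.scale_const hF, smul_eq_C_mul] at h'
  have := Ideal.mul_mem_left _ (C (c ^ t)) h'
  rwa [← mul_assoc, ← map_mul, ← mul_pow, mul_inv_cancel₀ hc, one_pow, C_1, one_mul] at this

section Signs

def signVector (s : σ → ℤˣ) : σ → R := fun i => ((s i : ℤ) : R)

theorem signVector_mul (s s' : σ → ℤˣ) :
    (signVector (s * s') : σ → R) = signVector s * signVector s' := by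
  ext i
  simp [signVector]

theorem signVector_one : (signVector 1 : σ → R) = 1 := by
  ext i
  simp [signVector]

theorem scale_signVector_ne_zero (s : σ → ℤˣ) {F : MvPolynomial σ R} (hF : F ≠ 0) :
    scale (signVector s) F ≠ 0 := by
  have hss : s * s = 1 := _root_.funext fun i => Int.units_mul_self (s i)
  have hinv : scale (signVector s) (scale (signVector s) F) = F := by
    rw [scale_scale, ← signVector_mul, hss, signVector_one, scale_one]
  intro h
  rw [← hinv, h, map_zero] at hF
  exact hF rfl

variable [Fintype σ] [DecidableEq σ]

noncomputable def signNorm (F : MvPolynomial σ R) : MvPolynomial σ R :=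
  ∏ s : σ → ℤˣ, scale (signVector s) F

theorem scale_signVector_signNorm (s' : σ → ℤˣ) (F : MvPolynomial σ R) :
    scale (signVector s') (signNorm F) = signNorm F := by
  rw [signNorm, map_prod]
  simp_rw [scale_scale, ← signVector_mul]
  exact Fintype.prod_equiv (Equiv.mulLeft s') _ _ fun _ => rfl

theorem mem_range_expand_of_forall_scale_signVector_eq [IsDomain R] (h2 : (2 : R) ≠ 0)
    {P : MvPolynomial σ R} (hP : ∀ s : σ → ℤˣ, scale (signVector s) P = P) :
    P ∈ (expand 2 : MvPolynomial σ R →ₐ[R] MvPolynomial σ R).range := by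
  have heven : ∀ d ∈ P.support, ∀ i, Even (d i) := by
    intro d hd i
    by_contra hodd
    have hflip := congr_arg (coeff d) (hP (Pi.mulSingle i (-1)))
    rw [coeff_scale, Finsupp.prod_fintype _ _ (by simp),
      Finset.prod_eq_single i (fun j _ hj => by simp [signVector, hj]) (by simp),
      show signVector (Pi.mulSingle i (-1)) i = (-1 : R) by simp [signVector],
      (Nat.not_even_iff_odd.mp hodd).neg_one_pow, neg_one_mul, neg_eq_iff_add_eq_zero,
      ← two_mul] at hflip
    exact mem_support_iff.mp hd ((mul_eq_zero.mp hflip).resolve_left h2)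
  rw [P.as_sum]
  refine Subalgebra.sum_mem _ fun d hd =>
    (AlgHom.mem_range _).mpr ⟨monomial (d.mapRange (· / 2) (Nat.zero_div 2)) (coeff d P), ?_⟩
  rw [expand_monomial]
  congr
  ext i
  simp [Nat.mul_div_cancel' (heven d hd i).two_dvd]

theorem two_mul_le_of_forall_mem_pow_ker_eval_signVector [IsDomain R] (h2 : (2 : R) ≠ 0)
    {F : MvPolynomial σ R} (hF : F ≠ 0) {t : ℕ} (ht : F.IsHomogeneous t) {m : ℕ}
    (hm : ∀ s : σ → ℤˣ, F ∈ RingHom.ker (eval (signVector s)) ^ m) : 2 * m ≤ t := by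
  have hNhom : (signNorm F).IsHomogeneous (Fintype.card (σ → ℤˣ) * t) := by
    have := IsHomogeneous.prod Finset.univ _ _ fun s _ => ht.scale (signVector s)
    rwa [Finset.sum_const, smul_eq_mul, Finset.card_univ] at this
  have hN0 : signNorm F ≠ 0 :=
    Finset.prod_ne_zero_iff.mpr fun s _ => scale_signVector_ne_zero s hF
  have hNmem : signNorm F ∈ RingHom.ker (eval 1) ^ (m * Fintype.card (σ → ℤˣ)) := by
    rw [pow_mul, ← Finset.card_univ, ← Finset.prod_const]
    exact Ideal.prod_mem_prod fun s _ => scale_mem_pow_ker_eval (by simpa using hm s)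
  obtain ⟨G, hG⟩ := (AlgHom.mem_range _).mp <| mem_range_expand_of_forall_scale_signVector_eq h2
    (scale_signVector_signNorm · F)
  have hG0 : G ≠ 0 := by
    rintro rfl
    exact hN0 (by simpa using hG.symm)
  have hdeg := le_totalDegree_of_mem_pow_ker_eval
    (mem_pow_ker_eval_one_of_expand h2 (hG ▸ hNmem)) hG0
  have htot : G.totalDegree * 2 = Fintype.card (σ → ℤˣ) * t := by
    rw [← totalDegree_expand, hG, hNhom.totalDegree hN0]
  have hn : 0 < Fintype.card (σ → ℤˣ) := Fintype.card_pos
  nlinarith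

end Signs

end MvPolynomial

section TaylorCoeffMatrix

variable {k : Type*} [Field k]

theorem exists_eval_det_ne_zero_of_injective {τ ρ ι : Type*} [Fintype ρ] [Fintype ι]
    [DecidableEq ι] (M : Matrix ρ ι (MvPolynomial τ k)) (x₀ : τ → k)
    (h₀ : Function.Injective (M.map (eval x₀)).mulVec) :
    ∃ D : MvPolynomial τ k, eval x₀ D ≠ 0 ∧
      ∀ x, eval x D ≠ 0 → Function.Injective (M.map (eval x)).mulVec := by
  classical
  obtain ⟨ψ, hψ⟩ := LinearMap.exists_leftInverse_of_injective (M.map (eval x₀)).mulVecLin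
    (LinearMap.ker_eq_bot.mpr h₀)
  set L := LinearMap.toMatrix' ψ
  have hL : ∀ x, eval x (L.map (C (σ := τ)) * M).det = (L * M.map (eval x)).det := by
    intro x
    rw [RingHom.map_det, RingHom.mapMatrix_apply, Matrix.map_mul, Matrix.map_map]
    congr
    ext
    simp
  have hL₀ : L * M.map (eval x₀) = 1 := by
    apply Matrix.toLin'.injective
    rw [Matrix.toLin'_mul, Matrix.toLin'_toMatrix', Matrix.toLin'_one]
    exact hψ
  refine ⟨(L.map (C (σ := τ)) * M).det, by simp [hL, hL₀], fun x hx => ?_⟩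
  have hunit : IsUnit (L * M.map (eval x)) :=
    (Matrix.isUnit_iff_isUnit_det _).mpr (isUnit_iff_ne_zero.mpr (hL x ▸ hx))
  refine Function.Injective.of_comp (f := L.mulVec) ?_
  simpa [Function.comp_def, Matrix.mulVec_mulVec] using Matrix.mulVec_injective_iff_isUnit.mpr hunit

variable {σ : Type*} [Finite σ] (ι : Type*)

/-- The coordinates of the points are the indeterminates `X (j, i)`. -/
noncomputable def taylorCoeffMatrix (m n : ℕ) :
    Matrix (ι × (Finsupp.finite_of_degree_lt (σ := σ) m).toFinset)
      (Finsupp.finite_of_degree_eq (σ := σ) n).toFinset (MvPolynomial (ι × σ) k) :=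
  fun r d => coeff r.2.1 (taylor (fun i => X (r.1, i)) (monomial d.1 1))

variable {ι}

theorem mulVec_taylorCoeffMatrix {m n : ℕ} (x : ι → σ → k)
    (v : (Finsupp.finite_of_degree_eq (σ := σ) n).toFinset → k) (r) :
    ((taylorCoeffMatrix ι m n).map (eval fun q => x q.1 q.2)).mulVec v r =
      coeff r.2.1 (taylor (x r.1) (∑ d, monomial d.1 (v d))) := by
  have hpt : (eval (fun q => x q.1 q.2) ∘ fun i => X (r.1, i)) = x r.1 := by
    funext i
    simp
  simp only [Matrix.mulVec, dotProduct, Matrix.map_apply, taylorCoeffMatrix, ← coeff_map,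
    map_taylor, hpt, map_monomial, map_one, map_sum, coeff_sum]
  refine Finset.sum_congr rfl fun d _ => ?_
  rw [show monomial d.1 (v d) = v d • monomial d.1 1 by rw [smul_monomial, smul_eq_mul, mul_one],
    map_smul, coeff_smul, smul_eq_mul, mul_comm]

theorem injective_mulVec_taylorCoeffMatrix_iff {m n : ℕ} (x : ι → σ → k) :
    Function.Injective ((taylorCoeffMatrix ι m n).map (eval fun q => x q.1 q.2)).mulVec ↔
      ∀ F : MvPolynomial σ k, F.IsHomogeneous n →
        (∀ j, F ∈ RingHom.ker (eval (x j)) ^ m) → F = 0 := by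
  classical
  have hmem : ∀ F j, F ∈ RingHom.ker (eval (x j)) ^ m ↔
      ∀ b : (Finsupp.finite_of_degree_lt (σ := σ) m).toFinset,
        coeff b.1 (taylor (x j) F) = 0 := by
    intro F j
    rw [mem_pow_ker_eval_iff, mem_pow_idealOfVars_iff']
    simp
  have hsum : ∀ F : MvPolynomial σ k, F.IsHomogeneous n →
      ∑ d : (Finsupp.finite_of_degree_eq (σ := σ) n).toFinset,
        monomial d.1 (coeff d.1 F) = F := by
    intro F hF
    rw [Finset.sum_coe_sort _ fun d => monomial d (coeff d F)]
    conv_rhs => rw [F.as_sum]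
    refine (Finset.sum_subset (fun d hd => ?_) fun d _ hd => ?_).symm
    · by_contra hdn
      exact mem_support_iff.mp hd (hF.coeff_eq_zero (by simpa using hdn))
    · rw [notMem_support_iff.mp hd, map_zero]
  constructor
  · intro hinj F hF hFm
    have hv : ((taylorCoeffMatrix ι m n).map (eval fun q => x q.1 q.2)).mulVec
        (fun d => coeff d.1 F) = 0 := by
      ext r
      rw [mulVec_taylorCoeffMatrix, hsum F hF]
      exact (hmem F r.1).mp (hFm r.1) r.2
    have hv0 := congr_fun (hinj (hv.trans (Matrix.mulVec_zero _).symm))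
    rw [← hsum F hF]
    exact Finset.sum_eq_zero fun d _ => by rw [hv0 d, Pi.zero_apply, map_zero]
  · intro h
    refine (injective_iff_map_eq_zero (Matrix.mulVecLin _)).mpr fun v hv => ?_
    have hF : (∑ d, monomial d.1 (v d) : MvPolynomial σ k).IsHomogeneous n :=
      IsHomogeneous.sum _ _ _ fun d _ => isHomogeneous_monomial _ (by
        simpa only [Set.Finite.mem_toFinset, Set.mem_ofPred_eq] using d.2)
    have hF0 := h _ hF fun j => (hmem _ j).mpr fun b => by
      rw [← mulVec_taylorCoeffMatrix (x := x) v (j, b)]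
      exact congr_fun hv (j, b)
    ext d
    have hd := congr_arg (coeff d.1) hF0
    rwa [coeff_sum, Finset.sum_eq_single d (fun d' _ hne => by
      rw [coeff_monomial, if_neg (Subtype.coe_ne_coe.mpr hne)]) (by simp), coeff_monomial,
      if_pos rfl, coeff_zero] at hd

end TaylorCoeffMatrix

section FatPoints

variable {k : Type*} [Field k]

theorem Generic.mono {N n : ℕ} {P Q : (Fin n → Fin (N + 1) → k) → Prop}
    (hPQ : ∀ p, (∀ j, p j ≠ 0) → P p → Q p) (hP : Generic k N n P) : Generic k N n Q := by
  obtain ⟨S, hS, hSP⟩ := hP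
  exact ⟨S, hS, fun p hp hpS => hPQ p hp (hSP p hp hpS)⟩

theorem generic_forall_isHomogeneous_eq_zero {N n : ℕ} (m d : ℕ)
    (x₀ : Fin n → Fin (N + 1) → k) (hx₀ : ∀ j, x₀ j ≠ 0)
    (h₀ : ∀ F : MvPolynomial (Fin (N + 1)) k, F.IsHomogeneous d →
      (∀ j, F ∈ RingHom.ker (eval (x₀ j)) ^ m) → F = 0) :
    Generic k N n fun x => ∀ F : MvPolynomial (Fin (N + 1)) k, F.IsHomogeneous d →
      (∀ j, F ∈ RingHom.ker (eval (x j)) ^ m) → F = 0 := by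
  obtain ⟨D, hD₀, hD⟩ := exists_eval_det_ne_zero_of_injective (taylorCoeffMatrix (Fin n) m d)
    (fun q => x₀ q.1 q.2) ((injective_mulVec_taylorCoeffMatrix_iff x₀).mpr h₀)
  refine ⟨{D}, ⟨x₀, hx₀, D, rfl, hD₀⟩, fun x _ ⟨f, hf, hfx⟩ => ?_⟩
  rw [Set.mem_singleton_iff] at hf
  exact (injective_mulVec_taylorCoeffMatrix_iff x).mp (hD _ (hf ▸ hfx))

theorem pointIdeal_le_ker_eval {σ : Type*} (p : σ → k) :
    pointIdeal p ≤ RingHom.ker (eval p) :=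
  Ideal.span_le.mpr fun _ hf => hf.2

theorem lt_of_mem_fatIdeal {N n : ℕ} {p : Fin n → Fin (N + 1) → k} {m d : ℕ}
    (hp : ∀ F : MvPolynomial (Fin (N + 1)) k, F.IsHomogeneous d →
      (∀ j, F ∈ RingHom.ker (eval (p j)) ^ m) → F = 0)
    {f : MvPolynomial (Fin (N + 1)) k} (hf : f ∈ fatIdeal p fun _ => m) (hf0 : f ≠ 0) {t : ℕ}
    (ht : f.IsHomogeneous t) : d < t := by
  by_contra! hle
  have hF : (X 0 ^ (d - t) * f).IsHomogeneous d := by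
    simpa [Nat.sub_add_cancel hle] using ((isHomogeneous_X k 0).pow (d - t)).mul ht
  refine mul_ne_zero (pow_ne_zero _ (X_ne_zero 0)) hf0 (hp _ hF fun j => ?_)
  exact Ideal.mul_mem_left _ _
    (Ideal.pow_right_mono (pointIdeal_le_ker_eval (p j)) m (Ideal.mem_iInf.mp hf j))

theorem exists_isHomogeneous_one_eval_eq_zero {σ : Type*} [Nontrivial σ] {p : σ → k}
    (hp : p ≠ 0) :
    ∃ ℓ : MvPolynomial σ k, ℓ ≠ 0 ∧ ℓ.IsHomogeneous 1 ∧ eval p ℓ = 0 := by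
  classical
  obtain ⟨i, hi⟩ := Function.ne_iff.mp hp
  obtain ⟨j, hji⟩ := exists_ne i
  refine ⟨C (p j) * X i - C (p i) * X j, fun h => hi ?_,
    (isHomogeneous_C_mul_X _ i).sub (isHomogeneous_C_mul_X _ j), by simp [mul_comm]⟩
  have := congr_arg (coeff (Finsupp.single j 1)) h
  simpa [coeff_X, Finsupp.single_left_inj, hji.symm] using this

theorem exists_ne_zero_mem_fatIdeal {N n : ℕ} (hN : N ≠ 0) {p : Fin n → Fin (N + 1) → k}
    (hp : ∀ j, p j ≠ 0) (m : Fin n → ℕ) :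
    ∃ f ∈ fatIdeal p m, f ≠ 0 ∧ ∃ t, f.IsHomogeneous t := by
  have : Nontrivial (Fin (N + 1)) := Fin.nontrivial_iff_two_le.mpr (by omega)
  choose ℓ hℓ0 hℓ hℓp using fun j => exists_isHomogeneous_one_eval_eq_zero (hp j)
  refine ⟨∏ j, ℓ j ^ m j, Ideal.mem_iInf.mpr fun j => ?_,
    Finset.prod_ne_zero_iff.mpr fun j _ => pow_ne_zero _ (hℓ0 j),
    _, IsHomogeneous.prod _ _ _ fun j _ => (hℓ j).pow (m j)⟩
  have hℓj : ℓ j ∈ pointIdeal (p j) := Ideal.subset_span ⟨⟨1, hℓ j⟩, hℓp j⟩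
  rw [← Finset.mul_prod_erase _ _ (Finset.mem_univ j)]
  exact Ideal.mul_mem_right _ _ (Ideal.pow_mem_pow hℓj _)

theorem le_alpha {σ : Type*} {I : Ideal (MvPolynomial σ k)} {a : ℕ}
    (hI : ∃ f ∈ I, f ≠ 0 ∧ ∃ t, f.IsHomogeneous t)
    (h : ∀ f ∈ I, ∀ t, f ≠ 0 → f.IsHomogeneous t → a ≤ t) : a ≤ alpha I := by
  obtain ⟨f, hf, hf0, t, ht⟩ := hI
  exact le_csInf ⟨t, f, hf, hf0, ht⟩ fun t ⟨f, hf, hf0, ht⟩ => h f hf t hf0 ht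

end FatPoints

section Cube

noncomputable def cubeIndex : (Fin 3 → ℤˣ) ≃ Fin 8 :=
  Fintype.equivFinOfCardEq rfl

/-- The vertices `(1, ±1, ±1, ±1)`, in an arbitrary enumeration. -/
noncomputable def cubeVertex (j : Fin 8) : Fin 4 → ℤˣ :=
  Fin.cons 1 (cubeIndex.symm j)

theorem exists_eq_const_mul_cubeVertex (s : Fin 4 → ℤˣ) :
    ∃ j, s = (fun _ => s 0) * cubeVertex j := by
  refine ⟨cubeIndex fun i => s 0 * s i.succ, funext fun i => ?_⟩
  cases i using Fin.cases with
  | zero => simp [cubeVertex]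
  | succ i => simp [cubeVertex, ← mul_assoc, Int.units_mul_self]

variable {k : Type*} [Field k] [CharZero k]

theorem eq_zero_of_mem_pow_ker_eval_cubeVertex {m : ℕ} (hm : 1 ≤ m)
    {F : MvPolynomial (Fin 4) k} (hF : F.IsHomogeneous (2 * m - 1))
    (h : ∀ j, F ∈ RingHom.ker (eval (signVector (cubeVertex j))) ^ m) : F = 0 := by
  by_contra hF0
  suffices 2 * m ≤ 2 * m - 1 by omega
  refine two_mul_le_of_forall_mem_pow_ker_eval_signVector two_ne_zero hF0 hF fun s => ?_
  obtain ⟨j, hj⟩ := exists_eq_const_mul_cubeVertex s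
  have hs : (signVector s : Fin 4 → k) = ((s 0 : ℤ) : k) • signVector (cubeVertex j) := by
    conv_lhs => rw [hj, signVector_mul]
    rfl
  rw [hs]
  exact hF.mem_pow_ker_eval_smul (by simp) (h j)

end Cube

/-- For every `m ≥ 1` and `8` points in general position in `ℙ³`, the fat points ideal
`I(m^{×8})` contains no nonzero form of degree `< 2m`; that is, `α(I(m^{×8})) ≥ 2m`. -/
theorem statement8 (k : Type*) [Field k] [CharZero k] (m : ℕ) (hm : 1 ≤ m) :
    Generic k 3 8 (fun p =>
      (∀ f ∈ fatIdeal p (fun _ => m), ∀ t : ℕ, f ≠ 0 → f.IsHomogeneous t → 2 * m ≤ t)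
      ∧ 2 * m ≤ alpha (fatIdeal p (fun _ => m))) := by
  refine (generic_forall_isHomogeneous_eq_zero m (2 * m - 1) (fun j => signVector (cubeVertex j))
    (fun j h => by simpa [signVector] using congr_fun h 0)
    fun F hF h => eq_zero_of_mem_pow_ker_eval_cubeVertex hm hF h).mono fun p hp hP => ?_
  have hlow : ∀ f ∈ fatIdeal p (fun _ => m), ∀ t : ℕ, f ≠ 0 → f.IsHomogeneous t →
      2 * m ≤ t :=
    fun f hf t hf0 ht => by have := lt_of_mem_fatIdeal hP hf hf0 ht; omega
  exact ⟨hlow, le_alpha (exists_ne_zero_mem_fatIdeal (by norm_num) hp _) hlow⟩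
end
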